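/- Let (xₙ) be a sequence of self-adjoint elements of 𝔐 and (αₙ) a sequence of real numbers such that xₙ − αₙ → 0 in measure, i.e. τ(e_ε^⊥(|xₙ − αₙ|)) → 0 for every ε > 0. Then the symmetrizations x̂ₙ := xₙ ⊗ 1 − 1 ⊗ xₙ converge to 0 in measure in (𝔐 ⊗ 𝔐, τ ⊗ τ), and αₙ − med(xₙ) → 0. In particular, if xₙ → 0 in measure then med(xₙ) → 0. -/

import Mathlib

open scoped NNReal

/-- A *quantum probability space*: a von Neumann algebra `M` (presented as a unital
C⋆-algebra; the weak closure properties that we use are recorded explicitly as axioms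
below) together with a normal faithful tracial state `τ` and, for every self-adjoint
element `x` and every Borel set `B ⊆ ℝ`, the spectral projection `specProj x B = E_x(B)`
coming from the spectral resolution `x = ∫ λ dE_x(λ)`. -/
structure QuantumProbabilitySpace (M : Type*) [CStarAlgebra M] [PartialOrder M]
    [StarOrderedRing M] where
  /-- the state -/
  τ : M →ₗ[ℂ] ℂ
  tracial : ∀ a b : M, τ (a * b) = τ (b * a)
  normalized : τ 1 = 1
  pos : ∀ a : M, 0 ≤ a → 0 ≤ (τ a).re ∧ (τ a).im = 0
  faithful : ∀ a : M, 0 ≤ a → τ a = 0 → a = 0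
  /-- spectral projections of self-adjoint elements -/
  specProj : M → Set ℝ → M
  specProj_isIdempotentElem : ∀ (x : M) (B : Set ℝ), IsSelfAdjoint x → MeasurableSet B →
    IsIdempotentElem (specProj x B)
  specProj_isSelfAdjoint : ∀ (x : M) (B : Set ℝ), IsSelfAdjoint x → MeasurableSet B →
    IsSelfAdjoint (specProj x B)
  specProj_univ : ∀ x : M, IsSelfAdjoint x → specProj x Set.univ = 1
  specProj_inter : ∀ (x : M) (B C : Set ℝ), IsSelfAdjoint x → MeasurableSet B →
    MeasurableSet C → specProj x (B ∩ C) = specProj x B * specProj x C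
  /-- normality of the state: the spectral distribution is countably additive -/
  specProj_iUnion : ∀ (x : M) (B : ℕ → Set ℝ), IsSelfAdjoint x → (∀ n, MeasurableSet (B n)) →
    Pairwise (Function.onFun Disjoint B) →
    HasSum (fun n => τ (specProj x (B n))) (τ (specProj x (⋃ n, B n)))
  specProj_commute : ∀ (x : M) (B : Set ℝ), IsSelfAdjoint x → MeasurableSet B →
    Commute x (specProj x B)
  /-- the spectral measure is supported on the spectrum -/
  specProj_spectrum : ∀ (x : M) (B : Set ℝ), IsSelfAdjoint x → MeasurableSet B →
    specProj x B = specProj x (B ∩ spectrum ℝ x)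
  /-- `x` compressed to `E_x((-∞, t])` is at most `t` -/
  specProj_le : ∀ (x : M) (t : ℝ), IsSelfAdjoint x →
    specProj x (Set.Iic t) * x * specProj x (Set.Iic t) ≤ (t : ℂ) • specProj x (Set.Iic t)
  /-- `x` compressed to `E_x([t, ∞))` is at least `t` -/
  specProj_ge : ∀ (x : M) (t : ℝ), IsSelfAdjoint x →
    (t : ℂ) • specProj x (Set.Ici t) ≤ specProj x (Set.Ici t) * x * specProj x (Set.Ici t)
  /-- compatibility with the functional calculus: `E_{f(x)}(B) = E_x(f⁻¹(B))` -/
  specProj_cfc : ∀ (x : M) (f : ℝ → ℝ) (B : Set ℝ), IsSelfAdjoint x → Continuous f →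
    MeasurableSet B → specProj (cfc f x) B = specProj x (f ⁻¹' B)
  /-- the spectral distribution of a (bounded) self-adjoint element is determined by
  its moments -/
  moments_determine : ∀ x y : M, IsSelfAdjoint x → IsSelfAdjoint y →
    (∀ n : ℕ, τ (x ^ n) = τ (y ^ n)) →
    ∀ B : Set ℝ, MeasurableSet B → τ (specProj x B) = τ (specProj y B)

/-- a projection in a von Neumann algebra: a self-adjoint idempotent -/
def IsProjection {M : Type*} [CStarAlgebra M] [PartialOrder M] [StarOrderedRing M]
    (p : M) : Prop := IsSelfAdjoint p ∧ IsIdempotentElem p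

/-- `r` is the supremum `⋁ F` of a family `F` of projections in the lattice of
projections of a von Neumann algebra -/
def IsSupProjection {M : Type*} [CStarAlgebra M] [PartialOrder M] [StarOrderedRing M]
    (F : Set M) (r : M) : Prop :=
  IsProjection r ∧ (∀ p ∈ F, p * r = p) ∧
    ∀ s : M, IsProjection s → (∀ p ∈ F, p * s = p) → r * s = r

/-- the absolute value `|x| = (x⋆x)^{1/2}` of an element of a C⋆-algebra -/
noncomputable def qAbs {M : Type*} [CStarAlgebra M] [PartialOrder M] [StarOrderedRing M]
    (x : M) : M := CFC.sqrt (star x * x)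

namespace QuantumProbabilitySpace

variable {M : Type*} [CStarAlgebra M] [PartialOrder M] [StarOrderedRing M]
variable (Q : QuantumProbabilitySpace M)

/-- the spectral distribution `B ↦ τ(E_x(B))` of a self-adjoint `x` -/
noncomputable def prob (x : M) (B : Set ℝ) : ℝ := (Q.τ (Q.specProj x B)).re


/-- `m` is a median of the self-adjoint element `x`:
`τ(e_{(-∞, m]}(x)) ≥ 1/2` and `τ(e_m^⊥(x)) = τ(e_{[m, ∞)}(x)) ≥ 1/2`. -/
def IsMedian (x : M) (m : ℝ) : Prop :=
  1 / 2 ≤ Q.prob x (Set.Iic m) ∧ 1 / 2 ≤ Q.prob x (Set.Ici m)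

/-- two self-adjoint random variables are identically distributed if their spectral
distributions coincide -/
def IdentDistrib (x y : M) : Prop :=
  ∀ B : Set ℝ, MeasurableSet B → Q.τ (Q.specProj x B) = Q.τ (Q.specProj y B)

/-- a self-adjoint random variable is symmetric if `x` and `-x` are identically
distributed -/
def IsSymmetric (x : M) : Prop := Q.IdentDistrib x (-x)

/-- the von Neumann subalgebra `W*(S)` generated by a set `S`: the smallest subset
containing `S` which is a unital star subalgebra closed under taking spectral
projections (the abstract surrogate for weak closedness). -/
def wstar (S : Set M) : Set M :=
  ⋂₀ {A : Set M | S ⊆ A ∧ (1 : M) ∈ A ∧ (∀ a ∈ A, ∀ b ∈ A, a + b ∈ A) ∧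
    (∀ a ∈ A, ∀ b ∈ A, a * b ∈ A) ∧ (∀ (c : ℂ), ∀ a ∈ A, c • a ∈ A) ∧
    (∀ a ∈ A, star a ∈ A) ∧
    (∀ a ∈ A, ∀ B : Set ℝ, MeasurableSet B → Q.specProj a B ∈ A)}

/-- the `p`-th power `‖x‖_p^p = τ(|x|^p)` of the noncommutative `L_p`-norm -/
noncomputable def lpNormPow (x : M) (p : ℝ) : ℝ := (Q.τ (CFC.rpow (qAbs x) p)).re

end QuantumProbabilitySpace


/-- A realization of the von Neumann tensor product `M ⊗ M`: a quantum probability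
space `(N, R.τ)` together with two unital trace-commuting ⋆-embeddings
`ι₁ : x ↦ x ⊗ 1` and `ι₂ : x ↦ 1 ⊗ x` whose ranges commute, such that the trace is
multiplicative on products, `(τ ⊗ τ)((a ⊗ 1)(1 ⊗ b)) = τ(a) τ(b)` (tensor
independence of the two copies), and which are compatible with spectral
projections (i.e. are normal). -/
structure QuantumProbabilitySpace.IsTensorSquare {M N : Type*}
    [CStarAlgebra M] [PartialOrder M] [StarOrderedRing M]
    [CStarAlgebra N] [PartialOrder N] [StarOrderedRing N]
    (Q : QuantumProbabilitySpace M) (R : QuantumProbabilitySpace N)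
    (i1 i2 : M →⋆ₐ[ℂ] N) : Prop where
  commutes : ∀ a b : M, Commute (i1 a) (i2 b)
  trace_mul : ∀ a b : M, R.τ (i1 a * i2 b) = Q.τ a * Q.τ b
  specProj_fst : ∀ (a : M) (B : Set ℝ), IsSelfAdjoint a → MeasurableSet B →
    R.specProj (i1 a) B = i1 (Q.specProj a B)
  specProj_snd : ∀ (a : M) (B : Set ℝ), IsSelfAdjoint a → MeasurableSet B →
    R.specProj (i2 a) B = i2 (Q.specProj a B)

/-!
Let `E` be the spectral projection of `x` for `{t | |t - a| < δ}`. On the projection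
`g = (E ⊗ 1)(1 ⊗ E)`, which commutes with `x̂`, both `x ⊗ 1` and `1 ⊗ x` lie within `δ` of `a`,
so `±x̂ ≤ 2δ < ε` there. Hence `τ(E_{±x̂}[ε, ∞)) ≤ 1 - τ(g) ≤ 2 τ(1 - E)`, and
`τ(e_ε^⊥(|x̂|)) ≤ 4 τ(e_δ^⊥(|x - a|))`. For the median: if `|x - a| ≥ ε` has mass `< 1/2`,
then neither `(-∞, a - ε]` nor `[a + ε, ∞)` has mass `≥ 1/2`, so every median lies within `ε`
of `a`.
-/

section CStarAlgebra

variable {A : Type*} [CStarAlgebra A]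

lemma sub_smul_one_eq_cfc {x : A} (hx : IsSelfAdjoint x) (a : ℝ) :
    x - (a : ℂ) • 1 = cfc (fun t : ℝ => t - a) x := by
  rw [cfc_sub _ _ x, cfc_id' ℝ x, cfc_const a x, Algebra.algebraMap_eq_smul_one, Complex.coe_smul]

variable [PartialOrder A] [StarOrderedRing A]

lemma IsStarProjection.mul_mul_mul_le_smul {p q u : A} {s : ℂ} (hq : IsStarProjection q)
    (hpq : Commute p q) (h : p * u * p ≤ s • p) : p * q * u * (p * q) ≤ s • (p * q) := by
  have := star_left_conjugate_le_conjugate h q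
  rwa [hq.isSelfAdjoint.star_eq, show q * (p * u * p) * q = q * p * u * (p * q) by noncomm_ring,
    mul_smul_comm, smul_mul_assoc, ← hpq.eq, mul_assoc p q q, hq.isIdempotentElem.eq] at this

lemma IsStarProjection.smul_le_mul_mul_mul {p q u : A} {s : ℂ} (hq : IsStarProjection q)
    (hpq : Commute p q) (h : s • p ≤ p * u * p) : s • (p * q) ≤ p * q * u * (p * q) := by
  have := star_left_conjugate_le_conjugate h q
  rwa [hq.isSelfAdjoint.star_eq, show q * (p * u * p) * q = q * p * u * (p * q) by noncomm_ring,
    mul_smul_comm, smul_mul_assoc, ← hpq.eq, mul_assoc p q q, hq.isIdempotentElem.eq] at this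

lemma qAbs_eq_cfc_abs {x : A} (hx : IsSelfAdjoint x) : qAbs x = cfc (fun t : ℝ => |t|) x :=
  CFC.abs_eq_cfc_norm x hx

lemma qAbs_sub_smul_one_eq_cfc {x : A} (hx : IsSelfAdjoint x) (a : ℝ) :
    qAbs (x - (a : ℂ) • 1) = cfc (fun t : ℝ => |t - a|) x := by
  rw [sub_smul_one_eq_cfc hx, qAbs_eq_cfc_abs (cfc_predicate _ x),
    ← cfc_comp (fun t : ℝ => |t|) (fun t : ℝ => t - a) x]
  rfl

/-- Writing `(w - δ)₊² = n (w - δ) n` with `n = (w - δ)₊^{1/2}`, the positive element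
`g (w - δ)₊² g` is also `≤ 0`. -/
lemma cfc_posPart_sub_mul_eq_zero {w g : A} {δ : ℝ} (hw : IsSelfAdjoint w)
    (hg : IsStarProjection g) (hgw : Commute g w) (h : g * w * g ≤ (δ : ℂ) • g) :
    cfc (fun t : ℝ => max (t - δ) 0) w * g = 0 := by
  set m := cfc (fun t : ℝ => max (t - δ) 0) w
  set n := cfc (fun t : ℝ => √(max (t - δ) 0)) w
  set y := w - (δ : ℂ) • 1 with hy
  have hmm : m * m = n * y * n := by
    rw [hy, sub_smul_one_eq_cfc hw, ← cfc_mul .., ← cfc_mul .., ← cfc_mul ..]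
    refine cfc_congr fun t _ => ?_
    rcases le_total (t - δ) 0 with ht | ht
    · simp [max_eq_right ht]
    · simp only [max_eq_left ht]
      rw [mul_comm (√(t - δ)), mul_assoc, Real.mul_self_sqrt ht]
  have hgy : g * y * g ≤ 0 := by
    rwa [mul_sub, sub_mul, mul_smul_comm, mul_one, smul_mul_assoc, hg.isIdempotentElem.eq,
      sub_nonpos]
  have hgn : Commute g n := (hgw.symm.cfc_real _).symm
  have hnsa : IsSelfAdjoint n := cfc_predicate _ w
  have hmsa : IsSelfAdjoint m := cfc_predicate _ w
  have hle : star (m * g) * (m * g) ≤ 0 :=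
    calc star (m * g) * (m * g) = g * (n * y * n) * g := by
          rw [star_mul, hg.isSelfAdjoint.star_eq, hmsa.star_eq, ← hmm]; noncomm_ring
      _ = star n * (g * y * g) * n := by
          rw [hnsa.star_eq, show g * (n * y * n) * g = g * n * y * (n * g) by noncomm_ring,
            show n * (g * y * g) * n = n * g * y * (g * n) by noncomm_ring, hgn.eq]
      _ ≤ star n * 0 * n := star_left_conjugate_le_conjugate hgy n
      _ = 0 := by simp
  exact (CStarRing.star_mul_self_eq_zero_iff _).mp (le_antisymm hle (star_mul_self_nonneg _))

end CStarAlgebra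

namespace QuantumProbabilitySpace

open MeasureTheory Filter Topology

variable {M : Type*} [CStarAlgebra M] [PartialOrder M] [StarOrderedRing M]
  (Q : QuantumProbabilitySpace M)

lemma re_trace_nonneg {a : M} (h : 0 ≤ a) : 0 ≤ (Q.τ a).re := (Q.pos a h).1

lemma re_trace_mono {a b : M} (h : a ≤ b) : (Q.τ a).re ≤ (Q.τ b).re := by
  simpa using Q.re_trace_nonneg (sub_nonneg.2 h)

lemma trace_mul_mul_self {p : M} (hp : IsIdempotentElem p) (a : M) :
    Q.τ (p * a * p) = Q.τ (a * p) := by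
  rw [Q.tracial, ← mul_assoc, hp.eq, Q.tracial]

lemma re_trace_mul_nonneg {h p : M} (hh : 0 ≤ h) (hp : IsStarProjection p) :
    0 ≤ (Q.τ (h * p)).re := by
  rw [← Q.trace_mul_mul_self hp.isIdempotentElem]
  simpa [hp.isSelfAdjoint.star_eq] using Q.re_trace_nonneg (star_left_conjugate_nonneg hh p)

lemma re_trace_add_sub_one_le {e f : M} (he : IsStarProjection e) (hf : IsStarProjection f) :
    (Q.τ e).re + (Q.τ f).re - 1 ≤ (Q.τ (e * f)).re := by
  have := Q.re_trace_mul_nonneg he.one_sub.nonneg hf.one_sub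
  rw [show (1 - e) * (1 - f) = 1 - e - f + e * f by noncomm_ring] at this
  simp only [map_add, map_sub, Q.normalized, Complex.add_re, Complex.sub_re,
    Complex.one_re] at this
  linarith
lemma re_trace_le_of_le_mul_mul {r k : M} (hr : IsStarProjection r) (hk : 0 ≤ k)
    (h : r ≤ r * k * r) : (Q.τ r).re ≤ (Q.τ k).re := by
  have hkr := Q.re_trace_mul_nonneg hk hr.one_sub
  rw [mul_sub, mul_one, map_sub, Complex.sub_re] at hkr
  calc (Q.τ r).re ≤ (Q.τ (r * k * r)).re := Q.re_trace_mono h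
    _ = (Q.τ (k * r)).re := by rw [Q.trace_mul_mul_self hr.isIdempotentElem]
    _ ≤ (Q.τ k).re := by linarith

lemma re_trace_le_one_sub_of_mul_eq_zero {k g : M} (hk : k ≤ 1) (hg : IsStarProjection g)
    (h : k * g = 0) : (Q.τ k).re ≤ 1 - (Q.τ g).re := by
  have := Q.re_trace_mul_nonneg (sub_nonneg.2 hk) hg.one_sub
  rw [show (1 - k) * (1 - g) = 1 - g - k + k * g by noncomm_ring, h] at this
  simpa [Q.normalized] using this

section

variable {x : M} (hx : IsSelfAdjoint x)
include hx

lemma isStarProjection_specProj {B : Set ℝ} (hB : MeasurableSet B) :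
    IsStarProjection (Q.specProj x B) :=
  ⟨Q.specProj_isIdempotentElem x B hx hB, Q.specProj_isSelfAdjoint x B hx hB⟩

lemma prob_nonneg {B : Set ℝ} (hB : MeasurableSet B) : 0 ≤ Q.prob x B :=
  Q.re_trace_nonneg (Q.isStarProjection_specProj hx hB).nonneg

lemma trace_specProj_empty : Q.τ (Q.specProj x ∅) = 0 := by
  have h := Q.specProj_iUnion x (fun _ => ∅) hx (fun _ => .empty) fun _ _ _ => Set.disjoint_empty _
  rw [Set.iUnion_empty] at h
  exact tendsto_const_nhds_iff.mp h.summable.tendsto_atTop_zero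

noncomputable def distribution : Measure ℝ :=
  Measure.ofMeasurable (fun B _ => ENNReal.ofReal (Q.prob x B))
    (by simp [prob, Q.trace_specProj_empty hx]) fun B hB hd => by
      have h : HasSum (fun n => Q.prob x (B n)) (Q.prob x (⋃ n, B n)) :=
        Complex.hasSum_re (Q.specProj_iUnion x B hx hB hd)
      rw [← ENNReal.ofReal_tsum_of_nonneg (fun n => Q.prob_nonneg hx (hB n)) h.summable,
        h.tsum_eq]

lemma distribution_real_apply {B : Set ℝ} (hB : MeasurableSet B) :
    (Q.distribution hx).real B = Q.prob x B := by
  rw [measureReal_def, distribution, Measure.ofMeasurable_apply _ hB,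
    ENNReal.toReal_ofReal (Q.prob_nonneg hx hB)]

instance isProbabilityMeasure_distribution : IsProbabilityMeasure (Q.distribution hx) :=
  ⟨by simp [distribution, Measure.ofMeasurable_apply _ MeasurableSet.univ, prob,
    Q.specProj_univ x hx, Q.normalized]⟩

lemma prob_mono {B C : Set ℝ} (hB : MeasurableSet B) (hC : MeasurableSet C) (hBC : B ⊆ C) :
    Q.prob x B ≤ Q.prob x C := by
  rw [← Q.distribution_real_apply hx hB, ← Q.distribution_real_apply hx hC]
  exact measureReal_mono hBC

lemma prob_compl {B : Set ℝ} (hB : MeasurableSet B) : Q.prob x Bᶜ = 1 - Q.prob x B := by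
  rw [← Q.distribution_real_apply hx hB, ← Q.distribution_real_apply hx hB.compl]
  exact probReal_compl_eq_one_sub hB

lemma prob_union {B C : Set ℝ} (hB : MeasurableSet B) (hC : MeasurableSet C) (hd : Disjoint B C) :
    Q.prob x (B ∪ C) = Q.prob x B + Q.prob x C := by
  rw [← Q.distribution_real_apply hx hB, ← Q.distribution_real_apply hx hC,
    ← Q.distribution_real_apply hx (hB.union hC)]
  exact measureReal_union hd hC

lemma prob_cfc {f : ℝ → ℝ} (hf : Continuous f) {B : Set ℝ} (hB : MeasurableSet B) :
    Q.prob (cfc f x) B = Q.prob x (f ⁻¹' B) := by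
  rw [prob, Q.specProj_cfc x f B hx hf hB, prob]

lemma specProj_mul_mul_le_of_subset_Iic {B : Set ℝ} (hB : MeasurableSet B) {t : ℝ}
    (hBt : B ⊆ Set.Iic t) :
    Q.specProj x B * x * Q.specProj x B ≤ (t : ℂ) • Q.specProj x B := by
  have hEP : Q.specProj x (Set.Iic t) * Q.specProj x B = Q.specProj x B := by
    rw [← Q.specProj_inter x _ _ hx measurableSet_Iic hB, Set.inter_eq_right.2 hBt]
  have hPE : Q.specProj x B * Q.specProj x (Set.Iic t) = Q.specProj x B := by
    rw [← Q.specProj_inter x _ _ hx hB measurableSet_Iic, Set.inter_eq_left.2 hBt]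
  simpa only [hEP] using (Q.isStarProjection_specProj hx hB).mul_mul_mul_le_smul
    (hEP.trans hPE.symm) (Q.specProj_le x t hx)

lemma smul_le_specProj_mul_mul_of_subset_Ici {B : Set ℝ} (hB : MeasurableSet B) {t : ℝ}
    (hBt : B ⊆ Set.Ici t) :
    (t : ℂ) • Q.specProj x B ≤ Q.specProj x B * x * Q.specProj x B := by
  have hEP : Q.specProj x (Set.Ici t) * Q.specProj x B = Q.specProj x B := by
    rw [← Q.specProj_inter x _ _ hx measurableSet_Ici hB, Set.inter_eq_right.2 hBt]
  have hPE : Q.specProj x B * Q.specProj x (Set.Ici t) = Q.specProj x B := by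
    rw [← Q.specProj_inter x _ _ hx hB measurableSet_Ici, Set.inter_eq_left.2 hBt]
  simpa only [hEP] using (Q.isStarProjection_specProj hx hB).smul_le_mul_mul_mul
    (hEP.trans hPE.symm) (Q.specProj_ge x t hx)

/-- The spectral projection `E_x[ε, ∞)` need not commute with `g`; its trace is bounded instead
through `k = φ(x)`, `φ(t) = (t - δ)₊ / (max t ε - δ)`, for which `0 ≤ k ≤ 1`, `k g = 0` and
`E_k[1, ∞) = E_x[ε, ∞)`. -/
lemma prob_Ici_le_one_sub_re_trace {g : M} (hg : IsStarProjection g) (hgx : Commute g x)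
    {δ ε : ℝ} (hδε : δ < ε) (h : g * x * g ≤ (δ : ℂ) • g) :
    Q.prob x (Set.Ici ε) ≤ 1 - (Q.τ g).re := by
  have hden : ∀ t, 0 < max t ε - δ := fun t => by linarith [le_max_right t ε]
  set φ : ℝ → ℝ := fun t => max (t - δ) 0 / (max t ε - δ)
  have hφ : Continuous φ := .div (by fun_prop) (by fun_prop) fun t => (hden t).ne'
  have hφ_le_one : ∀ t, φ t ≤ 1 := fun t =>
    (div_le_one (hden t)).2 (max_le (by linarith [le_max_left t ε]) (hden t).le)
  have hφ_preimage : φ ⁻¹' Set.Ici 1 = Set.Ici ε := by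
    ext t
    simp only [Set.mem_preimage, Set.mem_Ici, φ, one_le_div (hden t)]
    rcases le_total ε t with ht | ht
    · simp [ht]
    · constructor
      · intro h1
        rcases le_max_iff.1 h1 with h2 | h2 <;> linarith [max_eq_right ht, hden t]
      · intro h1; simp [le_antisymm ht h1]
  set k := cfc φ x
  have hk_nonneg : 0 ≤ k := cfc_nonneg fun t _ => div_nonneg (le_max_right _ _) (hden t).le
  have hkg : k * g = 0 := by
    have : k = cfc (fun t => (max t ε - δ)⁻¹) x * cfc (fun t => max (t - δ) 0) x := by
      rw [← cfc_mul _ _ x (Continuous.continuousOn <| by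
        exact Continuous.inv₀ (by fun_prop) fun t => (hden t).ne')]
      exact cfc_congr fun t _ => by simp [φ, div_eq_inv_mul]
    rw [this, mul_assoc, cfc_posPart_sub_mul_eq_zero hx hg hgx h, mul_zero]
  have hr : Q.specProj k (Set.Ici 1) = Q.specProj x (Set.Ici ε) := by
    rw [Q.specProj_cfc x φ _ hx hφ measurableSet_Ici, hφ_preimage]
  have hkr := Q.specProj_ge k 1 (IsSelfAdjoint.of_nonneg hk_nonneg)
  rw [hr, Complex.ofReal_one, one_smul] at hkr
  calc Q.prob x (Set.Ici ε) ≤ (Q.τ k).re :=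
        Q.re_trace_le_of_le_mul_mul (Q.isStarProjection_specProj hx measurableSet_Ici)
          hk_nonneg hkr
    _ ≤ 1 - (Q.τ g).re :=
        Q.re_trace_le_one_sub_of_mul_eq_zero (cfc_le_one _ _ fun t _ => hφ_le_one t) hg hkg

lemma prob_qAbs_Ici {ε : ℝ} (hε : 0 < ε) :
    Q.prob (qAbs x) (Set.Ici ε) = Q.prob x (Set.Ici ε) + Q.prob (-x) (Set.Ici ε) := by
  have hpre : (fun t : ℝ => |t|) ⁻¹' Set.Ici ε = Set.Ici ε ∪ (fun t => -t) ⁻¹' Set.Ici ε := by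
    ext t
    simp only [Set.mem_preimage, Set.mem_Ici, Set.mem_union, le_abs']
    constructor <;> rintro (h | h) <;> first | (left; linarith) | (right; linarith)
  rw [qAbs_eq_cfc_abs hx, Q.prob_cfc hx continuous_abs measurableSet_Ici, hpre,
    ← cfc_neg_id (R := ℝ) x, Q.prob_cfc hx continuous_neg measurableSet_Ici,
    Q.prob_union hx measurableSet_Ici (measurableSet_Ici.preimage continuous_neg.measurable)]
  exact Set.disjoint_left.2 fun t h1 h2 => by
    simp only [Set.mem_preimage, Set.mem_Ici] at h1 h2; linarith

lemma abs_sub_lt_of_isMedian {m a ε : ℝ} (hm : Q.IsMedian x m)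
    (h : Q.prob (qAbs (x - (a : ℂ) • 1)) (Set.Ici ε) < 1 / 2) : |a - m| < ε := by
  set S := (fun t : ℝ => |t - a|) ⁻¹' Set.Ici ε
  have hS : MeasurableSet S := measurableSet_Ici.preimage (by fun_prop)
  rw [qAbs_sub_smul_one_eq_cfc hx, Q.prob_cfc hx (by fun_prop) measurableSet_Ici] at h
  rw [abs_sub_lt_iff]
  constructor
  · by_contra! hc
    have := Q.prob_mono hx measurableSet_Iic hS fun t (ht : t ≤ m) => show ε ≤ |t - a| from
      le_abs'.2 (Or.inl (by linarith))
    linarith [hm.1]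
  · by_contra! hc
    have := Q.prob_mono hx measurableSet_Ici hS fun t (ht : m ≤ t) => show ε ≤ |t - a| from
      le_abs'.2 (Or.inr (by linarith))
    linarith [hm.2]

end

lemma tendsto_sub_of_isMedian {ι : Type*} {l : Filter ι} {x : ι → M}
    (hx : ∀ k, IsSelfAdjoint (x k)) {m a : ι → ℝ} (hm : ∀ k, Q.IsMedian (x k) (m k))
    (h : ∀ ε : ℝ, 0 < ε →
      Tendsto (fun k => Q.prob (qAbs (x k - (a k : ℂ) • 1)) (Set.Ici ε)) l (𝓝 0)) :
    Tendsto (fun k => a k - m k) l (𝓝 0) := by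
  refine NormedAddGroup.tendsto_nhds_zero.2 fun ε hε => ?_
  filter_upwards [(h ε hε).eventually (gt_mem_nhds one_half_pos)] with k hk
  exact Q.abs_sub_lt_of_isMedian (hx k) (hm k) hk

end QuantumProbabilitySpace

namespace QuantumProbabilitySpace.IsTensorSquare

variable {M N : Type*} [CStarAlgebra M] [PartialOrder M] [StarOrderedRing M]
  [CStarAlgebra N] [PartialOrder N] [StarOrderedRing N]
  {Q : QuantumProbabilitySpace M} {R : QuantumProbabilitySpace N} {i1 i2 : M →⋆ₐ[ℂ] N}
  (hts : Q.IsTensorSquare R i1 i2)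
include hts

lemma symm : Q.IsTensorSquare R i2 i1 where
  commutes a b := (hts.commutes b a).symm
  trace_mul a b := by rw [← (hts.commutes b a).eq, hts.trace_mul, mul_comm]
  specProj_fst := hts.specProj_snd
  specProj_snd := hts.specProj_fst

lemma trace_fst (a : M) : R.τ (i1 a) = Q.τ a := by
  simpa [Q.normalized] using hts.trace_mul a 1

lemma trace_snd (a : M) : R.τ (i2 a) = Q.τ a := hts.symm.trace_fst a

variable {x : M} (hx : IsSelfAdjoint x)
include hx

lemma compression_sub_le {B : Set ℝ} (hB : MeasurableSet B) {a δ : ℝ}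
    (hBlo : B ⊆ Set.Ici (a - δ)) (hBhi : B ⊆ Set.Iic (a + δ)) :
    i1 (Q.specProj x B) * i2 (Q.specProj x B) * (i1 x - i2 x) *
        (i1 (Q.specProj x B) * i2 (Q.specProj x B)) ≤
      ((2 * δ : ℝ) : ℂ) • (i1 (Q.specProj x B) * i2 (Q.specProj x B)) := by
  set e := i1 (Q.specProj x B)
  set f := i2 (Q.specProj x B)
  have hE := Q.isStarProjection_specProj hx hB
  have hef : Commute e f := hts.commutes _ _
  have hu : e * f * i1 x * (e * f) ≤ ((a + δ : ℝ) : ℂ) • (e * f) :=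
    (hE.map i2).mul_mul_mul_le_smul hef <| by
      simpa using OrderHomClass.mono i1 (Q.specProj_mul_mul_le_of_subset_Iic hx hB hBhi)
  have hv : ((a - δ : ℝ) : ℂ) • (e * f) ≤ e * f * i2 x * (e * f) := by
    rw [hef.eq]
    exact (hE.map i1).smul_le_mul_mul_mul hef.symm <| by
      simpa using OrderHomClass.mono i2 (Q.smul_le_specProj_mul_mul_of_subset_Ici hx hB hBlo)
  calc e * f * (i1 x - i2 x) * (e * f) = e * f * i1 x * (e * f) - e * f * i2 x * (e * f) := by
        noncomm_ring
    _ ≤ ((a + δ : ℝ) : ℂ) • (e * f) - ((a - δ : ℝ) : ℂ) • (e * f) := sub_le_sub hu hv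
    _ = ((2 * δ : ℝ) : ℂ) • (e * f) := by rw [← sub_smul]; push_cast; ring_nf

lemma prob_sub_Ici_le {B : Set ℝ} (hB : MeasurableSet B) {a δ ε : ℝ}
    (hBlo : B ⊆ Set.Ici (a - δ)) (hBhi : B ⊆ Set.Iic (a + δ)) (hδε : 2 * δ < ε) :
    R.prob (i1 x - i2 x) (Set.Ici ε) ≤
      1 - (R.τ (i1 (Q.specProj x B) * i2 (Q.specProj x B))).re := by
  have hE := Q.isStarProjection_specProj hx hB
  have hxE := Q.specProj_commute x B hx hB
  refine R.prob_Ici_le_one_sub_re_trace ((hx.map i1).sub (hx.map i2))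
    ((hE.map i1).mul (hE.map i2) (hts.commutes _ _)) ?_ hδε
    (hts.compression_sub_le hx hB hBlo hBhi)
  refine Commute.sub_right ?_ ?_
  · exact (hxE.map i1).symm.mul_left (hts.commutes x _).symm
  · exact (hts.commutes _ x).mul_left (hxE.map i2).symm

lemma prob_qAbs_sub_le (a : ℝ) {δ ε : ℝ} (hε : 0 < ε) (hδε : 2 * δ < ε) :
    R.prob (qAbs (i1 x - i2 x)) (Set.Ici ε) ≤ 4 * Q.prob (qAbs (x - (a : ℂ) • 1)) (Set.Ici δ) := by
  set B := (fun t : ℝ => |t - a|) ⁻¹' Set.Iio δ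
  have hB : MeasurableSet B := measurableSet_Iio.preimage (by fun_prop)
  have hBlo : B ⊆ Set.Ici (a - δ) := fun t (ht : |t - a| < δ) =>
    show a - δ ≤ t by linarith [neg_abs_le (t - a)]
  have hBhi : B ⊆ Set.Iic (a + δ) := fun t (ht : |t - a| < δ) =>
    show t ≤ a + δ by linarith [le_abs_self (t - a)]
  have hE := Q.isStarProjection_specProj hx hB
  have hfst := hts.prob_sub_Ici_le hx hB hBlo hBhi hδε
  have hsnd := hts.symm.prob_sub_Ici_le hx hB hBlo hBhi hδε
  rw [← (hts.commutes _ _).eq] at hsnd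
  have htrace : 2 * Q.prob x B - 1 ≤ (R.τ (i1 (Q.specProj x B) * i2 (Q.specProj x B))).re := by
    have := R.re_trace_add_sub_one_le (hE.map i1) (hE.map i2)
    rw [hts.trace_fst, hts.trace_snd] at this
    unfold QuantumProbabilitySpace.prob
    linarith
  have htail : Q.prob (qAbs (x - (a : ℂ) • 1)) (Set.Ici δ) = 1 - Q.prob x B := by
    rw [qAbs_sub_smul_one_eq_cfc hx, Q.prob_cfc hx (by fun_prop) measurableSet_Ici,
      ← Set.compl_Iio, Set.preimage_compl, Q.prob_compl hx hB]
  rw [R.prob_qAbs_Ici ((hx.map i1).sub (hx.map i2)) hε, neg_sub, htail]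
  linarith

end QuantumProbabilitySpace.IsTensorSquare

/-- If `x n - α n → 0` in measure, then the symmetrizations
`x̂ n = x n ⊗ 1 - 1 ⊗ x n` converge to `0` in measure and `α n - med(x n) → 0`;
in particular, if `x n → 0` in measure then `med(x n) → 0`. -/
theorem tendsto_symmetrization_of_tendsto_in_measure {M N : Type*}
    [CStarAlgebra M] [PartialOrder M] [StarOrderedRing M]
    [CStarAlgebra N] [PartialOrder N] [StarOrderedRing N]
    (Q : QuantumProbabilitySpace M) (R : QuantumProbabilitySpace N)
    (i1 i2 : M →⋆ₐ[ℂ] N) (hts : Q.IsTensorSquare R i1 i2)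
    (x : ℕ → M) (hsa : ∀ k, IsSelfAdjoint (x k))
    (med : ℕ → ℝ) (hmed : ∀ k, Q.IsMedian (x k) (med k))
    (a : ℕ → ℝ)
    (hconv : ∀ ε : ℝ, 0 < ε → Filter.Tendsto
      (fun k => Q.prob (qAbs (x k - (a k : ℂ) • 1)) (Set.Ici ε)) Filter.atTop (nhds 0)) :
    (∀ ε : ℝ, 0 < ε → Filter.Tendsto
        (fun k => R.prob (qAbs (i1 (x k) - i2 (x k))) (Set.Ici ε))
        Filter.atTop (nhds 0)) ∧
      Filter.Tendsto (fun k => a k - med k) Filter.atTop (nhds 0) ∧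
      ((∀ ε : ℝ, 0 < ε → Filter.Tendsto
          (fun k => Q.prob (qAbs (x k)) (Set.Ici ε)) Filter.atTop (nhds 0)) →
        Filter.Tendsto med Filter.atTop (nhds 0)) := by
  refine ⟨fun ε hε => ?_, Q.tendsto_sub_of_isMedian hsa hmed hconv, fun h0 => ?_⟩
  · have habs : ∀ k, IsSelfAdjoint (qAbs (i1 (x k) - i2 (x k))) := fun k =>
      .of_nonneg (CFC.abs_nonneg _)
    refine squeeze_zero (fun k => R.prob_nonneg (habs k) measurableSet_Ici)
      (fun k => hts.prob_qAbs_sub_le (hsa k) (a k) hε (by linarith : 2 * (ε / 3) < ε)) ?_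
    simpa using (hconv (ε / 3) (by positivity)).const_mul 4
  · simpa using (Q.tendsto_sub_of_isMedian hsa hmed (a := 0) (by simpa using h0)).neg
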